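/- arXiv:1603.08539 — 3 statements merged into one kernel-verified Lean document; each statement's English description precedes it below -/
import Mathlib

section
/- For 0 < q < p ≤ 1, any natural number n, and x ∈ [0,1), the following identity holds: 1 / ∏_{s=0}^{n}(p^s - q^s x) = p^{-n(n+1)/2} Σ_{k=0}^{∞} [n+k choose k]_{p,q} x^k p^{-kn}, where the series on the right converges. -/
open Filter Topology

noncomputable def pqInt (p q : ℝ) (n : ℕ) : ℝ := (p ^ n - q ^ n) / (p - q)

noncomputable def pqFact (p q : ℝ) (n : ℕ) : ℝ :=
  ∏ j ∈ Finset.range n, pqInt p q (j + 1)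

noncomputable def pqBinom (p q : ℝ) (n k : ℕ) : ℝ :=
  pqFact p q n / (pqFact p q k * pqFact p q (n - k))

noncomputable def mkz (p q : ℝ) (n : ℕ) (f : ℝ → ℝ) (x : ℝ) : ℝ :=
  if x = 1 then f 1 else
    (p ^ (n * (n + 1) / 2))⁻¹ *
      ∑' k : ℕ, pqBinom p q (n + k) k * x ^ k * (p ^ (k * n))⁻¹ *
        (∏ s ∈ Finset.range (n + 1), (p ^ s - q ^ s * x)) *
        f (p ^ n * pqInt p q k / pqInt p q (n + k))

noncomputable def supNorm (g : ℝ → ℝ) : ℝ :=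
  sSup ((fun x => |g x|) '' Set.Icc (0 : ℝ) 1)

noncomputable def modCont (f : ℝ → ℝ) (δ : ℝ) : ℝ :=
  sSup ((fun p : ℝ × ℝ => |f p.1 - f p.2|) ''
    {p : ℝ × ℝ | p.1 ∈ Set.Icc (0 : ℝ) 1 ∧ p.2 ∈ Set.Icc (0 : ℝ) 1 ∧ |p.1 - p.2| ≤ δ})

def StatLim (x : ℕ → ℝ) (L : ℝ) : Prop :=
  ∀ ε > 0, Filter.Tendsto
    (fun n => (((Finset.range (n + 1)).filter (fun k => ε ≤ |x k - L|)).card : ℝ) / (n : ℝ))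
    Filter.atTop (nhds 0)

/-!
Put `t = q / p`. Every `(p,q)`-integer `[m+1]_{p,q}` equals `p^m [m+1]_{1,t}`, so
`[n+k choose k]_{p,q} = p^{kn} [n+k choose k]_{1,t}` and `∏ (p^s - q^s x) = p^{n(n+1)/2} ∏ (1 - t^s x)`;
this reduces the identity to the case `p = 1`. There, writing `F_n(x) = ∑ₖ [n+k choose k]_{1,t} xᵏ`
(summable because `[m]_{1,t} ≤ 1/(1-t)`), the `t`-Pascal rule gives `(1 - t^{n+1} x) F_{n+1} = F_n`,
and induction on `n` starting from the geometric series `F_0` yields `F_n = 1 / ∏_{s ≤ n} (1 - t^s x)`.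
-/

section pqArith
variable {p q : ℝ}

lemma pqInt_succ_pos (hq : 0 < q) (hqp : q < p) (m : ℕ) : 0 < pqInt p q (m + 1) :=
  div_pos (sub_pos.2 (pow_lt_pow_left₀ hqp hq.le m.succ_ne_zero)) (sub_pos.2 hqp)

lemma pqFact_pos (hq : 0 < q) (hqp : q < p) (m : ℕ) : 0 < pqFact p q m :=
  Finset.prod_pos fun j _ => pqInt_succ_pos hq hqp j

lemma pqFact_succ (m : ℕ) : pqFact p q (m + 1) = pqFact p q m * pqInt p q (m + 1) :=
  Finset.prod_range_succ _ _

lemma pqFact_add (k n : ℕ) :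
    pqFact p q (k + n) = pqFact p q k * ∏ j ∈ Finset.range n, pqInt p q (k + j + 1) := by
  simp only [pqFact, Finset.prod_range_add, add_assoc]

lemma pqInt_add (hpq : p ≠ q) (m r : ℕ) :
    pqInt p q (m + r) = p ^ r * pqInt p q m + q ^ m * pqInt p q r := by
  have h : p - q ≠ 0 := sub_ne_zero.2 hpq
  simp only [pqInt]
  field_simp
  ring

lemma pqBinom_add_right {k : ℕ} (hk : pqFact p q k ≠ 0) (n : ℕ) :
    pqBinom p q (n + k) k = (∏ j ∈ Finset.range n, pqInt p q (k + j + 1)) / pqFact p q n := by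
  rw [pqBinom, add_tsub_cancel_right, add_comm, pqFact_add, mul_div_mul_left _ _ hk]

lemma pqBinom_zero_right {n : ℕ} (hn : pqFact p q n ≠ 0) : pqBinom p q n 0 = 1 := by
  simpa [pqBinom, pqFact] using div_self hn

lemma pqBinom_succ_succ (hq : 0 < q) (hqp : q < p) (n k : ℕ) :
    pqBinom p q (n + k + 2) (k + 1) =
      q ^ (n + 1) * pqBinom p q (n + k + 1) k + p ^ (k + 1) * pqBinom p q (n + k + 1) (k + 1) := by
  have hsplit := pqInt_add hqp.ne' (n + 1) (k + 1)
  rw [show n + 1 + (k + 1) = n + k + 2 by omega] at hsplit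
  simp only [pqBinom]
  rw [show n + k + 2 - (k + 1) = n + 1 by omega, show n + k + 1 - k = n + 1 by omega,
    show n + k + 1 - (k + 1) = n by omega, pqFact_succ (n + k + 1), pqFact_succ k, pqFact_succ n,
    hsplit]
  have := pqFact_pos hq hqp k
  have := pqFact_pos hq hqp n
  have := pqInt_succ_pos hq hqp k
  have := pqInt_succ_pos hq hqp n
  field_simp
  ring

end pqArith

section Rescale
variable {p : ℝ} (q : ℝ)

lemma pqInt_succ_eq_pow_mul (hp : p ≠ 0) (m : ℕ) :
    pqInt p q (m + 1) = p ^ m * pqInt 1 (q / p) (m + 1) := by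
  rcases eq_or_ne p q with rfl | hpq
  · simp [pqInt, div_self hp]
  have := sub_ne_zero.2 hpq
  rw [pqInt, pqInt, one_pow, div_pow, one_sub_div hp, one_sub_div (pow_ne_zero _ hp)]
  field_simp
  ring

lemma pqFact_eq_pow_mul (hp : p ≠ 0) (m : ℕ) :
    pqFact p q m = p ^ (∑ j ∈ Finset.range m, j) * pqFact 1 (q / p) m := by
  simp only [pqFact, pqInt_succ_eq_pow_mul q hp, Finset.prod_mul_distrib]
  rw [Finset.prod_pow_eq_pow_sum]

lemma pqBinom_add_eq_pow_mul (hp : p ≠ 0) (n k : ℕ) :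
    pqBinom p q (n + k) k = p ^ (k * n) * pqBinom 1 (q / p) (n + k) k := by
  have hexp : ∑ j ∈ Finset.range (n + k), j =
      ((∑ j ∈ Finset.range k, j) + ∑ j ∈ Finset.range n, j) + k * n := by
    rw [add_comm n, Finset.sum_range_add, Finset.sum_add_distrib, Finset.sum_const,
      Finset.card_range, smul_eq_mul]
    ring
  rw [pqBinom, pqBinom, add_tsub_cancel_right, pqFact_eq_pow_mul q hp, pqFact_eq_pow_mul q hp,
    pqFact_eq_pow_mul q hp, hexp, mul_mul_mul_comm, ← pow_add, pow_add, mul_assoc,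
    mul_div_mul_left _ _ (pow_ne_zero _ hp), mul_div_assoc]

lemma prod_pow_sub_pow_mul (hp : p ≠ 0) (n : ℕ) (x : ℝ) :
    ∏ s ∈ Finset.range (n + 1), (p ^ s - q ^ s * x) =
      p ^ (n * (n + 1) / 2) * ∏ s ∈ Finset.range (n + 1), (1 - (q / p) ^ s * x) := by
  have hfactor (s : ℕ) : p ^ s - q ^ s * x = p ^ s * (1 - (q / p) ^ s * x) := by
    rw [div_pow, mul_sub, mul_one, ← mul_assoc, mul_div_cancel₀ _ (pow_ne_zero s hp)]
  rw [Finset.prod_congr rfl fun s _ => hfactor s, Finset.prod_mul_distrib,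
    Finset.prod_pow_eq_pow_sum, Finset.sum_range_id, add_tsub_cancel_right, mul_comm (n + 1)]

end Rescale

lemma tsum_eq_mul_tsum_add_tsum_of_succ {K : Type*} [Field K] [TopologicalSpace K]
    [IsTopologicalRing K] [T2Space K] {f g : ℕ → K} {a : K} (hf : Summable f)
    (h0 : f 0 = g 0) (hsucc : ∀ k, f (k + 1) = a * f k + g (k + 1)) :
    ∑' k, f k = a * ∑' k, f k + ∑' k, g k := by
  have hg : Summable fun k => g (k + 1) :=
    (((summable_nat_add_iff 1).2 hf).sub (hf.mul_left a)).congr fun k => by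
      rw [hsucc]; ring
  calc ∑' k, f k = g 0 + ∑' k, (a * f k + g (k + 1)) := by
        rw [hf.tsum_eq_zero_add, h0, tsum_congr hsucc]
    _ = a * ∑' k, f k + (g 0 + ∑' k, g (k + 1)) := by
        rw [(hf.mul_left a).tsum_add hg, tsum_mul_left]
        ring
    _ = a * ∑' k, f k + ∑' k, g k := by
        rw [((summable_nat_add_iff 1).1 hg).tsum_eq_zero_add]

section QBinomialSeries
variable {t x : ℝ}

lemma pqInt_one_le (ht0 : 0 ≤ t) (ht1 : t < 1) (m : ℕ) : pqInt 1 t m ≤ (1 - t)⁻¹ := by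
  rw [pqInt, one_pow, div_eq_mul_inv]
  exact mul_le_of_le_one_left (inv_nonneg.2 (sub_nonneg.2 ht1.le))
    (sub_le_self _ (pow_nonneg ht0 m))

lemma pqBinom_one_add_le (ht0 : 0 < t) (ht1 : t < 1) (n k : ℕ) :
    pqBinom 1 t (n + k) k ≤ (1 - t)⁻¹ ^ n / pqFact 1 t n := by
  rw [pqBinom_add_right (pqFact_pos ht0 ht1 k).ne']
  gcongr
  · exact (pqFact_pos ht0 ht1 n).le
  calc ∏ j ∈ Finset.range n, pqInt 1 t (k + j + 1)
      ≤ ∏ _j ∈ Finset.range n, (1 - t)⁻¹ :=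
        Finset.prod_le_prod (fun j _ => (pqInt_succ_pos ht0 ht1 _).le)
          fun j _ => pqInt_one_le ht0.le ht1 _
    _ = (1 - t)⁻¹ ^ n := by rw [Finset.prod_const, Finset.card_range]

lemma summable_pqBinom_one_mul_pow (ht0 : 0 < t) (ht1 : t < 1) (hx0 : 0 ≤ x) (hx1 : x < 1)
    (n : ℕ) : Summable fun k => pqBinom 1 t (n + k) k * x ^ k :=
  Summable.of_nonneg_of_le
    (fun k => mul_nonneg (div_nonneg (pqFact_pos ht0 ht1 _).le
      (mul_nonneg (pqFact_pos ht0 ht1 _).le (pqFact_pos ht0 ht1 _).le)) (pow_nonneg hx0 k))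
    (fun k => mul_le_mul_of_nonneg_right (pqBinom_one_add_le ht0 ht1 n k) (pow_nonneg hx0 k))
    ((summable_geometric_of_lt_one hx0 hx1).mul_left _)

theorem hasSum_pqBinom_one_mul_pow (ht0 : 0 < t) (ht1 : t < 1) (hx0 : 0 ≤ x) (hx1 : x < 1)
    (n : ℕ) : HasSum (fun k => pqBinom 1 t (n + k) k * x ^ k)
      (∏ s ∈ Finset.range (n + 1), (1 - t ^ s * x))⁻¹ := by
  induction n with
  | zero =>
    have hterm (k : ℕ) : pqBinom 1 t (0 + k) k * x ^ k = x ^ k := by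
      rw [pqBinom_add_right (pqFact_pos ht0 ht1 k).ne']
      simp [pqFact]
    convert hasSum_geometric_of_lt_one hx0 hx1 using 1
    · exact funext hterm
    · simp
  | succ n ih =>
    have hsum := summable_pqBinom_one_mul_pow ht0 ht1 hx0 hx1 (n + 1)
    have hfactor : 0 < 1 - t ^ (n + 1) * x := by
      nlinarith [pow_le_one₀ ht0.le ht1.le (n := n + 1), pow_nonneg ht0.le (n + 1)]
    have hrec := tsum_eq_mul_tsum_add_tsum_of_succ (a := t ^ (n + 1) * x) hsum
      (g := fun k => pqBinom 1 t (n + k) k * x ^ k)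
      (by simp [pqBinom_zero_right (pqFact_pos ht0 ht1 _).ne'])
      fun k => by
        rw [show n + 1 + (k + 1) = n + k + 2 by omega, pqBinom_succ_succ ht0 ht1,
          show n + 1 + k = n + k + 1 by omega, show n + (k + 1) = n + k + 1 by omega]
        ring
    rw [Finset.prod_range_succ, mul_inv, ← ih.tsum_eq]
    convert hsum.hasSum using 1
    rw [mul_inv_eq_iff_eq_mul₀ hfactor.ne']
    linear_combination -hrec

end QBinomialSeries

theorem pq_mkz_identity_general (p q : ℝ) (hq : 0 < q) (hqp : q < p)
    (n : ℕ) (x : ℝ) (hx : x ∈ Set.Ico (0 : ℝ) 1) :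
    Summable (fun k : ℕ => pqBinom p q (n + k) k * x ^ k * (p ^ (k * n))⁻¹) ∧
    (∏ s ∈ Finset.range (n + 1), (p ^ s - q ^ s * x))⁻¹ =
      (p ^ (n * (n + 1) / 2))⁻¹ *
        ∑' k : ℕ, pqBinom p q (n + k) k * x ^ k * (p ^ (k * n))⁻¹ := by
  have hp : 0 < p := hq.trans hqp
  have hseries := hasSum_pqBinom_one_mul_pow (div_pos hq hp) ((div_lt_one hp).2 hqp) hx.1 hx.2 n
  have hterm (k : ℕ) : pqBinom p q (n + k) k * x ^ k * (p ^ (k * n))⁻¹ =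
      pqBinom 1 (q / p) (n + k) k * x ^ k := by
    rw [pqBinom_add_eq_pow_mul q hp.ne']
    field_simp
  simp only [hterm]
  rw [prod_pow_sub_pow_mul q hp.ne', mul_inv, hseries.tsum_eq]
  exact ⟨hseries.summable, rfl⟩

theorem pq_mkz_identity (p q : ℝ) (hq : 0 < q) (hqp : q < p) (hp : p ≤ 1)
    (n : ℕ) (x : ℝ) (hx : x ∈ Set.Ico (0 : ℝ) 1) :
    Summable (fun k : ℕ => pqBinom p q (n + k) k * x ^ k * (p ^ (k * n))⁻¹) ∧
    (∏ s ∈ Finset.range (n + 1), (p ^ s - q ^ s * x))⁻¹ =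
      (p ^ (n * (n + 1) / 2))⁻¹ *
        ∑' k : ℕ, pqBinom p q (n + k) k * x ^ k * (p ^ (k * n))⁻¹ :=
  pq_mkz_identity_general p q hq hqp n x hx
end

section
/- For 0 < q < p ≤ 1, natural number n, and x ∈ [0,1], the first central moment of the (p,q)-Meyer-König and Zeller operator vanishes: M_{n,p,q}((t - x); x) = 0. -/
open Filter Topology

/-! With weights `w k = [n+k choose k] x^k p^(-kn)` and nodes `t k = p^n [k] / [n+k]`, the
operator is a constant multiple of `∑ w k f (t k)`. The recursion of the `(p,q)`-binomials gives
`w (k+1) t (k+1) = x w k`, and `t 0 = 0`, so `∑ w k t k = x ∑ w k` and the first central moment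
vanishes. The series converge for `x < 1` by the ratio test, since `w (k+1) / w k → x`; at
`x = 1` the operator is evaluation at `1`. -/

section PQCalculus

variable {p q : ℝ}

lemma pqInt_pos (hq : 0 ≤ q) (hqp : q < p) {m : ℕ} (hm : m ≠ 0) : 0 < pqInt p q m :=
  div_pos (sub_pos.mpr (pow_lt_pow_left₀ hqp hq hm)) (sub_pos.mpr hqp)

lemma pqInt_eq_mul (hp : p ≠ 0) (m : ℕ) :
    pqInt p q m = p ^ m * (1 - (q / p) ^ m) / (p - q) := by
  rw [pqInt, div_pow]
  field_simp

lemma pqBinom_add_succ (n k : ℕ) :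
    pqBinom p q (n + (k + 1)) (k + 1) =
      pqBinom p q (n + k) k * (pqInt p q (n + (k + 1)) / pqInt p q (k + 1)) := by
  simp only [pqBinom, Nat.add_sub_cancel]
  rw [← add_assoc, pqFact_succ, pqFact_succ, div_mul_div_comm]
  ring

lemma tendsto_pqInt_add_div_pqInt (hq : 0 ≤ q) (hqp : q < p) (n : ℕ) :
    Tendsto (fun k : ℕ => pqInt p q (n + (k + 1)) / pqInt p q (k + 1) / p ^ n) atTop (𝓝 1) := by
  have hp : 0 < p := hq.trans_lt hqp
  have hpq : p - q ≠ 0 := (sub_pos.mpr hqp).ne'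
  have hr : Tendsto (fun k : ℕ => (q / p) ^ (k + 1)) atTop (𝓝 0) :=
    (tendsto_pow_atTop_nhds_zero_of_lt_one (div_nonneg hq hp.le)
      ((div_lt_one hp).mpr hqp)).comp (tendsto_add_atTop_nat 1)
  have hratio : ∀ k : ℕ, pqInt p q (n + (k + 1)) / pqInt p q (k + 1) / p ^ n =
      (1 - (q / p) ^ n * (q / p) ^ (k + 1)) / (1 - (q / p) ^ (k + 1)) := by
    intro k
    rw [pqInt_eq_mul hp.ne', pqInt_eq_mul hp.ne', pow_add, pow_add (q / p)]
    field_simp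
  rw [show (1 : ℝ) = (1 - (q / p) ^ n * 0) / (1 - 0) by simp]
  exact ((tendsto_const_nhds.sub (hr.const_mul _)).div (tendsto_const_nhds.sub hr)
    (by norm_num)).congr fun k => (hratio k).symm

end PQCalculus


section MKZ

variable {p q : ℝ} {n : ℕ} {x : ℝ}

noncomputable def mkzWeight (p q : ℝ) (n : ℕ) (x : ℝ) (k : ℕ) : ℝ :=
  pqBinom p q (n + k) k * x ^ k * (p ^ (k * n))⁻¹

noncomputable def mkzNode (p q : ℝ) (n k : ℕ) : ℝ :=
  p ^ n * pqInt p q k / pqInt p q (n + k)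

lemma mkz_of_ne_one (f : ℝ → ℝ) (hx : x ≠ 1) :
    mkz p q n f x = (p ^ (n * (n + 1) / 2))⁻¹ *
      ∑' k, mkzWeight p q n x k * (∏ s ∈ Finset.range (n + 1), (p ^ s - q ^ s * x)) *
        f (mkzNode p q n k) :=
  if_neg hx

lemma mkzWeight_succ (hp : p ≠ 0) (k : ℕ) :
    mkzWeight p q n x (k + 1) =
      x * (pqInt p q (n + (k + 1)) / pqInt p q (k + 1) / p ^ n) * mkzWeight p q n x k := by
  rw [mkzWeight, mkzWeight, pqBinom_add_succ]
  field_simp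
  ring

lemma mkzNode_zero : mkzNode p q n 0 = 0 := by
  simp [mkzNode, pqInt]

lemma mkzWeight_succ_mul_mkzNode_succ (hq : 0 ≤ q) (hqp : q < p) (k : ℕ) :
    mkzWeight p q n x (k + 1) * mkzNode p q n (k + 1) = x * mkzWeight p q n x k := by
  have hp : p ≠ 0 := (hq.trans_lt hqp).ne'
  have hk : pqInt p q (k + 1) ≠ 0 := (pqInt_pos hq hqp k.succ_ne_zero).ne'
  have hnk : pqInt p q (n + (k + 1)) ≠ 0 := (pqInt_pos hq hqp (n + k).succ_ne_zero).ne'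
  rw [mkzWeight_succ hp, mkzNode]
  field_simp

lemma summable_mkzWeight (hq : 0 ≤ q) (hqp : q < p) (hx₀ : 0 ≤ x) (hx₁ : x < 1) :
    Summable (mkzWeight p q n x) := by
  have hp : 0 < p := hq.trans_lt hqp
  obtain ⟨r, hxr, hr₁⟩ := exists_between hx₁
  refine summable_of_ratio_norm_eventually_le hr₁ ?_
  have hlim := (tendsto_pqInt_add_div_pqInt hq hqp n).const_mul x
  rw [mul_one] at hlim
  filter_upwards [hlim.eventually (eventually_lt_nhds hxr)] with k hk
  have hratio_nonneg : 0 ≤ x * (pqInt p q (n + (k + 1)) / pqInt p q (k + 1) / p ^ n) := by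
    have hnk := pqInt_pos hq hqp (n + k).succ_ne_zero
    have hk := pqInt_pos hq hqp k.succ_ne_zero
    positivity
  rw [mkzWeight_succ hp.ne', norm_mul, Real.norm_of_nonneg hratio_nonneg]
  exact mul_le_mul_of_nonneg_right hk.le (norm_nonneg _)

/-- As `mkzNode p q n 0 = 0`, shifting the index turns the series into `x` times the series of
the weights. -/
lemma hasSum_mkzWeight_mul_mkzNode (hq : 0 ≤ q) (hqp : q < p) (hx₀ : 0 ≤ x) (hx₁ : x < 1) :
    HasSum (fun k => mkzWeight p q n x k * mkzNode p q n k) (x * ∑' k, mkzWeight p q n x k) := by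
  rw [← hasSum_nat_add_iff' 1]
  simpa [mkzNode_zero, mkzWeight_succ_mul_mkzNode_succ hq hqp] using
    (summable_mkzWeight hq hqp hx₀ hx₁).hasSum.mul_left x

lemma tsum_mkzWeight_mul_mkzNode_sub (hq : 0 ≤ q) (hqp : q < p) (hx₀ : 0 ≤ x) (hx₁ : x < 1) :
    ∑' k, mkzWeight p q n x k * (mkzNode p q n k - x) = 0 := by
  simp_rw [mul_sub]
  rw [((hasSum_mkzWeight_mul_mkzNode hq hqp hx₀ hx₁).sub
    ((summable_mkzWeight hq hqp hx₀ hx₁).hasSum.mul_right x)).tsum_eq, mul_comm, sub_self]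

end MKZ

theorem mkz_central_first_general (p q : ℝ) (hq : 0 < q) (hqp : q < p)
    (n : ℕ) (x : ℝ) (hx : x ∈ Set.Icc (0 : ℝ) 1) :
    mkz p q n (fun t => t - x) x = 0 := by
  rcases eq_or_ne x 1 with rfl | hx₁
  · simp [mkz]
  rw [mkz_of_ne_one _ hx₁]
  simp_rw [mul_right_comm (mkzWeight p q n x _), tsum_mul_right,
    tsum_mkzWeight_mul_mkzNode_sub hq.le hqp hx.1 (hx.2.lt_of_ne hx₁), zero_mul, mul_zero]

theorem mkz_central_first (p q : ℝ) (hq : 0 < q) (hqp : q < p) (hp : p ≤ 1)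
    (n : ℕ) (x : ℝ) (hx : x ∈ Set.Icc (0 : ℝ) 1) :
    mkz p q n (fun t => t - x) x = 0 :=
  mkz_central_first_general p q hq hqp n x hx
end

section
/- For 0 < q < p ≤ 1 and any natural numbers n, k, the ratio p^n [k]_{p,q} / [n+k]_{p,q} lies in [0, 1), and the map k ↦ p^n [k]_{p,q}/[n+k]_{p,q} is monotonically increasing in k. -/
open Filter Topology

/-! Dividing numerator and denominator by `p ^ (n + k)` turns the node into
`(1 - t ^ k) / (1 - t ^ (n + k))` with `t = q / p ∈ (0, 1)`. This is `< 1` since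
`t ^ (n + k) < t ^ k`, and it increases in `k` because the two cross products of consecutive
nodes differ by `t ^ k (1 - t) (1 - t ^ n) ≥ 0`. -/

lemma mul_pqInt_div_pqInt {p q : ℝ} (hp : p ≠ 0) (hpq : p ≠ q) (n k : ℕ) :
    p ^ n * pqInt p q k / pqInt p q (n + k) = (1 - (q / p) ^ k) / (1 - (q / p) ^ (n + k)) := by
  rw [pqInt, pqInt, mul_div_assoc', div_div_div_cancel_right₀ (sub_ne_zero.mpr hpq), div_pow,
    div_pow, one_sub_div (pow_ne_zero _ hp), one_sub_div (pow_ne_zero _ hp), div_div_div_eq,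
    pow_add]
  field_simp

lemma one_sub_pow_div_one_sub_pow_mem_Ico {t : ℝ} (ht0 : 0 < t) (ht1 : t < 1) {n : ℕ}
    (hn : n ≠ 0) (k : ℕ) : (1 - t ^ k) / (1 - t ^ (n + k)) ∈ Set.Ico 0 1 := by
  have hden : 0 < 1 - t ^ (n + k) := sub_pos.mpr (pow_lt_one₀ ht0.le ht1 (by omega))
  have hpow : t ^ (n + k) < t ^ k := pow_lt_pow_right_of_lt_one₀ ht0 ht1 (by omega)
  refine ⟨div_nonneg (sub_nonneg.mpr (pow_le_one₀ ht0.le ht1.le)) hden.le, ?_⟩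
  rw [div_lt_one hden]
  linarith

lemma monotone_one_sub_pow_div_one_sub_pow {t : ℝ} (ht0 : 0 ≤ t) (ht1 : t < 1) {n : ℕ}
    (hn : n ≠ 0) : Monotone fun k : ℕ => (1 - t ^ k) / (1 - t ^ (n + k)) := by
  have hden : ∀ k, 0 < 1 - t ^ (n + k) := fun k => sub_pos.mpr (pow_lt_one₀ ht0 ht1 (by omega))
  refine monotone_nat_of_le_succ fun k => ?_
  rw [div_le_div_iff₀ (hden k) (hden (k + 1))]
  have key : 0 ≤ t ^ k * (1 - t) * (1 - t ^ n) :=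
    mul_nonneg (mul_nonneg (pow_nonneg ht0 k) (by linarith))
      (sub_nonneg.mpr (pow_le_one₀ ht0 ht1.le))
  calc (1 - t ^ k) * (1 - t ^ (n + (k + 1)))
      = (1 - t ^ (k + 1)) * (1 - t ^ (n + k)) - t ^ k * (1 - t) * (1 - t ^ n) := by ring
    _ ≤ (1 - t ^ (k + 1)) * (1 - t ^ (n + k)) := sub_le_self _ key

theorem mkz_nodes_general (p q : ℝ) (hq : 0 < q) (hqp : q < p)
    (n : ℕ) (hn : 1 ≤ n) :
    (∀ k : ℕ, p ^ n * pqInt p q k / pqInt p q (n + k) ∈ Set.Ico (0 : ℝ) 1) ∧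
    Monotone (fun k : ℕ => p ^ n * pqInt p q k / pqInt p q (n + k)) := by
  have hp : 0 < p := hq.trans hqp
  have ht0 : 0 < q / p := div_pos hq hp
  have ht1 : q / p < 1 := (div_lt_one hp).mpr hqp
  have hn0 : n ≠ 0 := Nat.one_le_iff_ne_zero.mp hn
  simp only [mul_pqInt_div_pqInt hp.ne' hqp.ne' n]
  exact ⟨one_sub_pow_div_one_sub_pow_mem_Ico ht0 ht1 hn0,
    monotone_one_sub_pow_div_one_sub_pow ht0.le ht1 hn0⟩

theorem mkz_nodes (p q : ℝ) (hq : 0 < q) (hqp : q < p) (hp : p ≤ 1)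
    (n : ℕ) (hn : 1 ≤ n) :
    (∀ k : ℕ, p ^ n * pqInt p q k / pqInt p q (n + k) ∈ Set.Ico (0 : ℝ) 1) ∧
    Monotone (fun k : ℕ => p ^ n * pqInt p q k / pqInt p q (n + k)) :=
  mkz_nodes_general p q hq hqp n hn
end
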